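/- arXiv:1302.6400 — 2 statements merged into one kernel-verified Lean document; each statement's English description precedes it below -/
import Mathlib

section
/- Let f be continuous and F(x) = ∫₀ˣ f. Let u : ℝ → ℝ be the inverse of y ↦ ∫₀ʸ e^{F}. If x(t) = u(y(t)) where x is twice differentiable and solves ẍ + f(x)ẋ² + g(x)ẋ + h(x) = 0, then y solves ÿ + g(u(y))ẏ + h(u(y))e^{F(u(y))} = 0. -/
/-! With `G s = ∫₀ˢ e^{F}` we have `y = G ∘ x`, `G' = e^{F}` and `G'' = e^{F} f`, so the chain rule
gives `ÿ = e^{F(x)} (ẍ + f(x) ẋ²)` and `ẏ = e^{F(x)} ẋ`. Hence the left-hand side of the equation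
for `y` is `e^{F(x)}` times the left-hand side of the equation for `x`, and `u (y t) = x t`. -/

open Real

section ChainRule

variable {G G' G'' x : ℝ → ℝ}

theorem deriv_comp_eq_of_hasDerivAt (hG : ∀ s, HasDerivAt G (G' s) s)
    (hx : ∀ t, DifferentiableAt ℝ x t) :
    deriv (G ∘ x) = fun t => G' (x t) * deriv x t :=
  funext fun t => ((hG (x t)).comp t (hx t).hasDerivAt).deriv

theorem deriv_deriv_comp_eq_of_hasDerivAt (hG : ∀ s, HasDerivAt G (G' s) s)
    (hG' : ∀ s, HasDerivAt G' (G'' s) s) (hx : ∀ t, DifferentiableAt ℝ x t)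
    (hx' : ∀ t, DifferentiableAt ℝ (deriv x) t) (t : ℝ) :
    deriv (deriv (G ∘ x)) t = G'' (x t) * deriv x t ^ 2 + G' (x t) * deriv (deriv x) t := by
  rw [deriv_comp_eq_of_hasDerivAt hG hx]
  have hprod : HasDerivAt (fun t => G' (x t) * deriv x t)
      (G'' (x t) * deriv x t * deriv x t + G' (x t) * deriv (deriv x) t) t :=
    ((hG' (x t)).comp t (hx t).hasDerivAt).mul (hx' t).hasDerivAt
  rw [hprod.deriv]
  ring

end ChainRule

theorem stmt_1_general (f g h : ℝ → ℝ) (hf : Continuous f)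
    (F : ℝ → ℝ) (hF : ∀ x, F x = ∫ t in (0:ℝ)..x, f t)
    (u : ℝ → ℝ) (hu : ∀ x, u (∫ ξ in (0:ℝ)..x, Real.exp (F ξ)) = x)
    (x : ℝ → ℝ)
    (hx1 : ∀ t, DifferentiableAt ℝ x t)
    (hx2 : ∀ t, DifferentiableAt ℝ (deriv x) t)
    (hode : ∀ t, deriv (deriv x) t + f (x t) * (deriv x t) ^ 2
      + g (x t) * deriv x t + h (x t) = 0)
    (y : ℝ → ℝ) (hy : ∀ t, y t = ∫ ξ in (0:ℝ)..(x t), Real.exp (F ξ)) :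
    ∀ t, deriv (deriv y) t + g (u (y t)) * deriv y t
      + h (u (y t)) * Real.exp (F (u (y t))) = 0 := by
  intro t
  have hFd : ∀ s, HasDerivAt F (f s) s := by
    rw [show F = fun s => ∫ t in (0:ℝ)..s, f t from funext hF]
    exact fun s => (hf.integral_hasStrictDerivAt 0 s).hasDerivAt
  have hexpF : ∀ s, HasDerivAt (fun s => exp (F s)) (exp (F s) * f s) s := fun s => (hFd s).exp
  have hG : ∀ s, HasDerivAt (fun s => ∫ ξ in (0:ℝ)..s, exp (F ξ)) (exp (F s)) s := fun s =>
    ((continuous_iff_continuousAt.2 fun s => (hexpF s).continuousAt).integral_hasStrictDerivAt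
      0 s).hasDerivAt
  have hyG : y = (fun s => ∫ ξ in (0:ℝ)..s, exp (F ξ)) ∘ x := funext hy
  have huy : u (y t) = x t := by rw [hy t, hu]
  rw [huy, hyG, deriv_deriv_comp_eq_of_hasDerivAt hG hexpF hx1 hx2,
    deriv_comp_eq_of_hasDerivAt hG hx1]
  linear_combination exp (F (x t)) * hode t

theorem stmt_1 (f g h : ℝ → ℝ) (hf : Continuous f) (hg : Continuous g)
    (hh : Continuous h)
    (F : ℝ → ℝ) (hF : ∀ x, F x = ∫ t in (0:ℝ)..x, f t)
    (u : ℝ → ℝ) (hu : ∀ x, u (∫ ξ in (0:ℝ)..x, Real.exp (F ξ)) = x)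
    (x : ℝ → ℝ)
    (hx1 : ∀ t, DifferentiableAt ℝ x t)
    (hx2 : ∀ t, DifferentiableAt ℝ (deriv x) t)
    (hode : ∀ t, deriv (deriv x) t + f (x t) * (deriv x t) ^ 2
      + g (x t) * deriv x t + h (x t) = 0)
    (y : ℝ → ℝ) (hy : ∀ t, y t = ∫ ξ in (0:ℝ)..(x t), Real.exp (F ξ)) :
    ∀ t, deriv (deriv y) t + g (u (y t)) * deriv y t
      + h (u (y t)) * Real.exp (F (u (y t))) = 0 :=
  stmt_1_general f g h hf F hF u hu x hx1 hx2 hode y hy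
end

section
/- Conversely, if a differentiable function A on (0,b) satisfies A(x) < x, H(A(x)) = H(x), and h(x) = (1/4)(x − A(x))(1 − A'(x)) with H(x) = ∫₀ˣ h > 0, then A(x) = x − 2√(2H(x)) on (0,b). -/
/-!
The function `φ x = (x - A x)² / 8` satisfies `φ' = h = H'` on `(0, b)`, and both `φ` and `H`
tend to `0` at `0⁺`; hence `φ = H` there. Solving `(x - A x)² = 8 H x` with `x - A x > 0` gives
the formula.
-/

open Set Filter Topology

theorem eqOn_Ioo_of_hasDerivAt_of_tendsto_nhdsGT {E : Type*} [NormedAddCommGroup E]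
    [NormedSpace ℝ E] {f g f' : ℝ → E} {a b : ℝ} {L : E}
    (hf : ∀ x ∈ Ioo a b, HasDerivAt f (f' x) x) (hg : ∀ x ∈ Ioo a b, HasDerivAt g (f' x) x)
    (hfa : Tendsto f (𝓝[>] a) (𝓝 L)) (hga : Tendsto g (𝓝[>] a) (𝓝 L)) :
    EqOn f g (Ioo a b) := by
  intro x hx
  obtain ⟨c, hc⟩ := isOpen_Ioo.exists_eq_add_of_deriv_eq isPreconnected_Ioo
    (fun y hy => (hf y hy).differentiableAt.differentiableWithinAt)
    (fun y hy => (hg y hy).differentiableAt.differentiableWithinAt)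
    (fun y hy => (hf y hy).deriv.trans (hg y hy).deriv.symm)
  have hfc : Tendsto f (𝓝[>] a) (𝓝 (L + c)) := by
    refine (hga.add_const c).congr' ?_
    filter_upwards [Ioo_mem_nhdsGT (hx.1.trans hx.2)] with y hy using (hc hy).symm
  have hc0 : c = 0 := by simpa using tendsto_nhds_unique hfa hfc
  simpa [hc0] using hc hx

theorem stmt_11_general (h : ℝ → ℝ) (hh : Continuous h)
    (H : ℝ → ℝ) (hH : ∀ x, H x = ∫ t in (0:ℝ)..x, h t)
    (b : ℝ)
    (A : ℝ → ℝ)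
    (hAdiff : ∀ x ∈ Set.Ioo 0 b, DifferentiableAt ℝ A x)
    (hAlt : ∀ x ∈ Set.Ioo 0 b, A x < x)
    (hA0 : Filter.Tendsto A (nhdsWithin 0 (Set.Ioi 0)) (nhds 0))
    (heq : ∀ x ∈ Set.Ioo 0 b, h x = (1 / 4) * (x - A x) * (1 - deriv A x)) :
    ∀ x ∈ Set.Ioo 0 b, A x = x - 2 * Real.sqrt (2 * H x) := by
  have hHderiv : ∀ y, HasDerivAt H (h y) y := fun y => by
    rw [show H = _ from funext hH]
    exact (hh.integral_hasStrictDerivAt 0 y).hasDerivAt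
  have hHlim : Tendsto H (𝓝[>] 0) (𝓝 0) := by
    simpa [hH] using (hHderiv 0).continuousAt.tendsto.mono_left nhdsWithin_le_nhds
  have hφderiv : ∀ y ∈ Ioo 0 b, HasDerivAt (fun y => (y - A y) ^ 2 / 8) (h y) y := by
    intro y hy
    refine ((((hasDerivAt_id' y).sub (hAdiff y hy).hasDerivAt).pow 2).div_const 8).congr_deriv ?_
    rw [heq y hy, Pi.sub_apply]
    ring
  have hφlim : Tendsto (fun y => (y - A y) ^ 2 / 8) (𝓝[>] 0) (𝓝 0) := by
    simpa using (((tendsto_id.mono_left nhdsWithin_le_nhds).sub hA0).pow 2).div_const (8 : ℝ)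
  intro x hx
  have hφH : (x - A x) ^ 2 / 8 = H x :=
    eqOn_Ioo_of_hasDerivAt_of_tendsto_nhdsGT hφderiv (fun y _ => hHderiv y) hφlim hHlim hx
  have hnonneg : 0 ≤ x - A x := sub_nonneg.2 (hAlt x hx).le
  rw [← hφH, show 2 * ((x - A x) ^ 2 / 8) = ((x - A x) / 2) ^ 2 by ring,
    Real.sqrt_sq (by positivity)]
  ring

theorem stmt_11 (h : ℝ → ℝ) (hh : Continuous h)
    (H : ℝ → ℝ) (hH : ∀ x, H x = ∫ t in (0:ℝ)..x, h t)
    (b : ℝ) (hb : 0 < b) (hHpos : ∀ x ∈ Set.Ioo 0 b, 0 < H x)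
    (A : ℝ → ℝ)
    (hAdiff : ∀ x ∈ Set.Ioo 0 b, DifferentiableAt ℝ A x)
    (hAlt : ∀ x ∈ Set.Ioo 0 b, A x < x)
    (hAH : ∀ x ∈ Set.Ioo 0 b, H (A x) = H x)
    (hA0 : Filter.Tendsto A (nhdsWithin 0 (Set.Ioi 0)) (nhds 0))
    (heq : ∀ x ∈ Set.Ioo 0 b, h x = (1 / 4) * (x - A x) * (1 - deriv A x)) :
    ∀ x ∈ Set.Ioo 0 b, A x = x - 2 * Real.sqrt (2 * H x) :=
  stmt_11_general h hh H hH b A hAdiff hAlt hA0 heq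
end
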